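/- Let a, b, c ∈ F_{q²} with a^q + b ∈ F_q. Then Σ_{u ∈ F_q, u ≠ 0} Σ_{w ∈ F_{q²}} χ(u·w^{q+1} + u·w² + (a^q·u^q + b·u)·w + c·u) = η((a^q + b)² − 4Tr(c)) · q². -/

import Mathlib

/-!
Write `F = 𝔽_q` and `Tr x = x^q + x`. The character `χ` is invariant under `x ↦ x^q`, so
`χ x = ψ (Tr x)` for the nontrivial character `ψ t = χ (t / 2)` of `F`. For `u ∈ F` the argument
of `χ` has trace `u · f (Tr w)` with `f t = t² + (a^q + b) t + Tr c ∈ F[t]`, and `Tr` maps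
`𝔽_{q²}` onto `F` with fibres of size `q` (kernel and image both have at most `q` elements, and
their sizes multiply to `q²`). Hence the inner sum is `q ∑_{t ∈ F} ψ (u f t)`, orthogonality in `u`
turns the double sum into `q² (N - 1)` with `N` the number of roots of `f` in `F`, and completing
the square gives `N = 1 + η (disc f)`.
-/

open Finset
open scoped Classical

open Polynomial in
theorem card_filter_pow_eq_mul_le {K : Type*} [Field K] [Fintype K] {q : ℕ} (hq : 1 < q)
    (c : K) : #{x : K | x ^ q = c * x} ≤ q := by
  have hdeg : (X ^ q - C c * X : K[X]).natDegree = q := by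
    rw [natDegree_sub_eq_left_of_natDegree_lt, natDegree_X_pow]
    exact (natDegree_C_mul_le c X).trans_lt (by simpa using hq)
  have hne : (X ^ q - C c * X : K[X]) ≠ 0 := by
    rintro h; simp [h] at hdeg; omega
  refine (card_le_degree_of_subset_roots fun x hx => ?_).trans_eq hdeg
  simp_all [sub_eq_zero]

theorem one_lt_of_card_eq_sq {K : Type*} [Fintype K] [Nontrivial K] {q : ℕ}
    (hK : Fintype.card K = q ^ 2) : 1 < q := by
  have := hK ▸ Fintype.one_lt_card (α := K)
  nlinarith

theorem pow_pow_eq_self_of_card_eq_sq {K : Type*} [Field K] [Fintype K] {q : ℕ}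
    (hK : Fintype.card K = q ^ 2) (x : K) : (x ^ q) ^ q = x := by
  rw [← pow_mul, ← sq, ← hK, FiniteField.pow_card]

section FrobeniusTrace

variable (K : Type*) [Field K] (p : ℕ) [ExpChar K p] (n : ℕ)

def frobFixedSubfield : Subfield K := (iterateFrobenius K p n).eqLocusField (RingHom.id K)

def frobTrace : K →+ K := (iterateFrobenius K p n).toAddMonoidHom + AddMonoidHom.id K

variable {K p n}

theorem mem_frobFixedSubfield {x : K} : x ∈ frobFixedSubfield K p n ↔ x ^ p ^ n = x := Iff.rfl

theorem frobTrace_apply (x : K) : frobTrace K p n x = x ^ p ^ n + x := rfl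

theorem frobTrace_mem [Fintype K] (hK : Fintype.card K = (p ^ n) ^ 2) (x : K) :
    frobTrace K p n x ∈ frobFixedSubfield K p n := by
  rw [mem_frobFixedSubfield, frobTrace_apply, add_pow_expChar_pow,
    pow_pow_eq_self_of_card_eq_sq hK, add_comm]

theorem card_frobFixedSubfield_le [Fintype K] (hq : 1 < p ^ n) :
    Nat.card (frobFixedSubfield K p n) ≤ p ^ n := by
  simpa [Nat.card_eq_fintype_card, Fintype.card_subtype, mem_frobFixedSubfield]
    using card_filter_pow_eq_mul_le hq (1 : K)

theorem card_ker_frobTrace_le [Fintype K] (hq : 1 < p ^ n) :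
    Nat.card (frobTrace K p n).ker ≤ p ^ n := by
  simpa [Nat.card_eq_fintype_card, Fintype.card_subtype, AddMonoidHom.mem_ker, frobTrace_apply,
    add_eq_zero_iff_eq_neg] using card_filter_pow_eq_mul_le hq (-1 : K)

theorem card_ker_frobTrace_eq_and_range_eq [Fintype K] (hK : Fintype.card K = (p ^ n) ^ 2) :
    Nat.card (frobTrace K p n).ker = p ^ n ∧
      (frobTrace K p n).range = (frobFixedSubfield K p n).toAddSubgroup := by
  have hq := one_lt_of_card_eq_sq hK
  have hle : (frobTrace K p n).range ≤ (frobFixedSubfield K p n).toAddSubgroup := by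
    rintro _ ⟨x, rfl⟩
    exact frobTrace_mem hK x
  have hmul := (frobTrace K p n).ker.card_mul_index
  rw [AddSubgroup.index_ker, Nat.card_eq_fintype_card (α := K), hK] at hmul
  have hker := card_ker_frobTrace_le (K := K) hq
  have hrange : Nat.card (frobTrace K p n).range ≤ p ^ n :=
    (AddSubgroup.card_le_of_le hle).trans (card_frobFixedSubfield_le hq)
  have hker' : Nat.card (frobTrace K p n).ker = p ^ n := by nlinarith
  refine ⟨hker', AddSubgroup.eq_of_le_of_card_ge hle ?_⟩
  exact (card_frobFixedSubfield_le hq).trans (by nlinarith)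

theorem card_filter_frobTrace_eq [Fintype K] (hK : Fintype.card K = (p ^ n) ^ 2) {t : K}
    (ht : t ∈ frobFixedSubfield K p n) : #{w | frobTrace K p n w = t} = p ^ n := by
  obtain ⟨hker, hrange⟩ := card_ker_frobTrace_eq_and_range_eq hK
  have ht' : t ∈ Set.range (frobTrace K p n) := by
    rw [← AddMonoidHom.coe_range, hrange]; exact ht
  rw [AddMonoidHom.card_fiber_eq_of_mem_range _ ht' ⟨0, map_zero _⟩, ← hker,
    Nat.card_eq_fintype_card, Fintype.card_subtype]
  simp only [AddMonoidHom.mem_ker]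

theorem sum_comp_frobTrace {M : Type*} [AddCommMonoid M] [Fintype K]
    (hK : Fintype.card K = (p ^ n) ^ 2) (G : K → M) :
    ∑ w, G (frobTrace K p n w) = p ^ n • ∑ t : frobFixedSubfield K p n, G t := by
  rw [← Finset.sum_fiberwise univ (fun w => (⟨_, frobTrace_mem hK w⟩ : frobFixedSubfield K p n)),
    Finset.smul_sum]
  refine Fintype.sum_congr _ _ fun t => ?_
  have hfiber : ∀ w ∈ ({w | (⟨_, frobTrace_mem hK w⟩ : frobFixedSubfield K p n) = t} : Finset K),
      G (frobTrace K p n w) = G t := by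
    intro w hw
    rw [← (mem_filter.mp hw).2]
  rw [sum_congr rfl hfiber, sum_const]
  congr 1
  simpa [Subtype.ext_iff] using card_filter_frobTrace_eq hK t.2

theorem card_frobFixedSubfield [Fintype K] (hK : Fintype.card K = (p ^ n) ^ 2) :
    Fintype.card (frobFixedSubfield K p n) = p ^ n := by
  have h := sum_comp_frobTrace hK (fun _ => 1)
  simp only [sum_const, card_univ, smul_eq_mul, mul_one, hK] at h
  exact Nat.eq_of_mul_eq_mul_left (one_lt_of_card_eq_sq hK).le (h.symm.trans (sq _))

end FrobeniusTrace

section TraceAddChar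

variable (K : Type*) [Field K] [Fintype K] (p : ℕ) [Fact p.Prime] [CharP K p] {ζ : ℂ}

noncomputable def traceAddChar (hζ : IsPrimitiveRoot ζ p) : AddChar K ℂ :=
  letI := ZMod.algebra K p
  (AddChar.zmodChar p hζ.pow_eq_one).compAddMonoidHom (Algebra.trace (ZMod p) K).toAddMonoidHom

variable {K p}

theorem eq_traceAddChar_of_forall {k : ℕ} (hK : Fintype.card K = p ^ k)
    (hζ : IsPrimitiveRoot ζ p) {χ : K → ℂ}
    (hχ : ∀ x : K, ∀ m : ℕ, (m : K) = ∑ i ∈ range k, x ^ p ^ i → χ x = ζ ^ m) :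
    χ = traceAddChar K p hζ := by
  let := ZMod.algebra K p
  have hrank : Module.finrank (ZMod p) K = k := by
    have := (Module.card_eq_pow_finrank (K := ZMod p) (V := K)).symm.trans hK
    rw [ZMod.card] at this
    exact Nat.pow_right_injective (Fact.out : p.Prime).two_le this
  funext x
  refine hχ x (Algebra.trace (ZMod p) K x).val ?_
  have hsum := FiniteField.algebraMap_trace_eq_sum_pow (ZMod p) K x
  rw [hrank, Nat.card_zmod] at hsum
  rw [ZMod.natCast_val, ← hsum]
  rfl

theorem traceAddChar_pow_pow (hζ : IsPrimitiveRoot ζ p) (x : K) (k : ℕ) :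
    traceAddChar K p hζ (x ^ p ^ k) = traceAddChar K p hζ x := by
  let := ZMod.algebra K p
  have h := Algebra.trace_eq_of_algEquiv (FiniteField.frobeniusAlgEquivOfAlgebraic (ZMod p) K ^ k) x
  rw [AlgEquiv.coe_pow, FiniteField.coe_frobeniusAlgEquivOfAlgebraic_iterate, ZMod.card] at h
  simp only [traceAddChar, AddChar.compAddMonoidHom_apply, LinearMap.toAddMonoidHom_coe, h]

theorem traceAddChar_ne_one (hζ : IsPrimitiveRoot ζ p) : traceAddChar K p hζ ≠ 1 := by
  let := ZMod.algebra K p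
  obtain ⟨x, hx⟩ := Algebra.trace_surjective (ZMod p) K 1
  refine AddChar.ne_one_iff.mpr ⟨x, ?_⟩
  simp only [traceAddChar, AddChar.compAddMonoidHom_apply, LinearMap.toAddMonoidHom_coe, hx,
    AddChar.zmodChar_apply, ZMod.val_one, pow_one]
  exact hζ.ne_one (Fact.out : p.Prime).one_lt

end TraceAddChar

theorem AddChar.apply_eq_apply_half_add {K R : Type*} [Field K] [CommMonoid R]
    (ψ : AddChar K R) (σ : K →+* K) (hσ : ∀ x, ψ (σ x) = ψ x) (h2 : (2 : K) ≠ 0) (x : K) :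
    ψ x = ψ (2⁻¹ * (σ x + x)) := by
  have hsplit : 2⁻¹ * (σ x + x) = σ (2⁻¹ * x) + 2⁻¹ * x := by
    rw [map_mul, map_inv₀, map_ofNat]
    ring
  rw [hsplit, AddChar.map_add_eq_mul, hσ, ← AddChar.map_add_eq_mul]
  congr 1
  field_simp
  ring

section Descent

variable {K : Type*} [Field K] {p : ℕ} [ExpChar K p] {n : ℕ}

noncomputable def AddChar.descent {R : Type*} [CommMonoid R] (Χ : AddChar K R) (F : Subfield K) :
    AddChar F R :=
  (Χ.mulShift 2⁻¹).compAddMonoidHom F.subtype.toAddMonoidHom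

theorem AddChar.descent_apply {R : Type*} [CommMonoid R] (Χ : AddChar K R) (F : Subfield K)
    (t : F) : Χ.descent F t = Χ (2⁻¹ * t) :=
  rfl

variable [Fintype K] {Χ : AddChar K ℂ}

theorem AddChar.apply_eq_descent_frobTrace (hK : Fintype.card K = (p ^ n) ^ 2)
    (hΧ : ∀ x, Χ (x ^ p ^ n) = Χ x) (h2 : (2 : K) ≠ 0) (x : K) :
    Χ x = Χ.descent (frobFixedSubfield K p n) ⟨frobTrace K p n x, frobTrace_mem hK x⟩ := by
  rw [AddChar.descent_apply]
  exact Χ.apply_eq_apply_half_add (iterateFrobenius K p n) hΧ h2 x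

theorem AddChar.descent_ne_one (hK : Fintype.card K = (p ^ n) ^ 2)
    (hΧ : ∀ x, Χ (x ^ p ^ n) = Χ x) (h2 : (2 : K) ≠ 0)
    (hne : Χ ≠ 1) : Χ.descent (frobFixedSubfield K p n) ≠ 1 := by
  obtain ⟨x, hx⟩ := AddChar.ne_one_iff.mp hne
  refine AddChar.ne_one_iff.mpr ⟨⟨frobTrace K p n x, frobTrace_mem hK x⟩, ?_⟩
  rwa [← Χ.apply_eq_descent_frobTrace hK hΧ h2 x]

theorem sum_addChar_eq_card_mul_sum_descent (hK : Fintype.card K = (p ^ n) ^ 2)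
    (hΧ : ∀ x, Χ (x ^ p ^ n) = Χ x) (h2 : (2 : K) ≠ 0)
    (u s T : frobFixedSubfield K p n) (c : K) (hT : (T : K) = c ^ p ^ n + c) :
    ∑ w, Χ (u * w ^ (p ^ n + 1) + u * w ^ 2 + s * u * w + c * u) =
      p ^ n * ∑ t, Χ.descent (frobFixedSubfield K p n) (u * (t ^ 2 + s * t + T)) := by
  have hfixed : ∀ {x : K}, x ∈ frobFixedSubfield K p n → iterateFrobenius K p n x = x :=
    fun hx => hx
  have hinv : ∀ w : K, iterateFrobenius K p n (iterateFrobenius K p n w) = w :=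
    pow_pow_eq_self_of_card_eq_sq hK
  have hterm : ∀ w : K,
      Χ (u * w ^ (p ^ n + 1) + u * w ^ 2 + s * u * w + c * u) =
        Χ (2⁻¹ * (u * (frobTrace K p n w ^ 2 + s * frobTrace K p n w + T))) := by
    intro w
    rw [Χ.apply_eq_apply_half_add (iterateFrobenius K p n) hΧ h2, pow_succ, ← iterateFrobenius_def]
    congr 2
    simp only [map_add, map_mul, map_pow, hinv, hfixed u.2, hfixed s.2, frobTrace_apply,
      ← iterateFrobenius_def, hT]
    ring
  simp only [hterm, sum_comp_frobTrace hK (fun y => Χ (2⁻¹ * (u * (y ^ 2 + s * y + T)))),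
    nsmul_eq_mul, Nat.cast_pow, AddChar.descent_apply]
  rfl

theorem sum_sum_addChar_eq_sq_mul_card_roots_sub_one (hK : Fintype.card K = (p ^ n) ^ 2)
    (hΧ : ∀ x, Χ (x ^ p ^ n) = Χ x) (h2 : (2 : K) ≠ 0) (hne : Χ ≠ 1)
    (s T : frobFixedSubfield K p n) (c : K) (hT : (T : K) = c ^ p ^ n + c) :
    ∑ u ∈ univ.filter (fun u : K => u ^ p ^ n = u ∧ u ≠ 0),
        ∑ w, Χ (u * w ^ (p ^ n + 1) + u * w ^ 2 + s * u * w + c * u) =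
      (p ^ n : ℂ) ^ 2 * (#{t : frobFixedSubfield K p n | t ^ 2 + s * t + T = 0} - 1) := by
  have hψ : (Χ.descent (frobFixedSubfield K p n)).IsPrimitive :=
    AddChar.IsPrimitive.of_ne_one (Χ.descent_ne_one hK hΧ h2 hne)
  have hunits : univ.filter (fun u : K => u ^ p ^ n = u ∧ u ≠ 0) =
      (univ.erase (0 : frobFixedSubfield K p n)).map (Function.Embedding.subtype _) := by
    ext u
    simp [mem_frobFixedSubfield, and_comm]
  have horth : ∑ u, ∑ t, Χ.descent (frobFixedSubfield K p n) (u * (t ^ 2 + s * t + T)) =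
      p ^ n * #{t : frobFixedSubfield K p n | t ^ 2 + s * t + T = 0} := by
    rw [sum_comm]
    simp_rw [AddChar.sum_mulShift _ hψ]
    rw [← Nat.cast_sum, ← sum_filter, sum_const, smul_eq_mul, card_frobFixedSubfield hK]
    push_cast
    ring
  rw [hunits, sum_map]
  simp only [Function.Embedding.subtype_apply,
    sum_addChar_eq_card_mul_sum_descent hK hΧ h2 _ s T c hT]
  rw [← mul_sum, sum_erase_eq_sub (mem_univ _), horth]
  simp [card_frobFixedSubfield hK]
  ring

end Descent

theorem card_filter_quadratic_eq_card_filter_sq {F : Type*} [Field F] [Fintype F]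
    [DecidableEq F] (h2 : (2 : F) ≠ 0) (s t : F) :
    #{x : F | x ^ 2 + s * x + t = 0} = #{y : F | y ^ 2 = s ^ 2 - 4 * t} := by
  refine card_nbij' (fun x => 2 * x + s) (fun y => (y - s) / 2) ?_ ?_ ?_ ?_
  · intro x hx
    simp only [coe_filter, mem_univ, true_and, Set.mem_ofPred_eq] at hx ⊢
    linear_combination 4 * hx
  · intro y hy
    simp only [coe_filter, mem_univ, true_and, Set.mem_ofPred_eq] at hy ⊢
    have h4 : (4 : F) ≠ 0 := by
      rw [show (4 : F) = 2 * 2 by norm_num]; exact mul_ne_zero h2 h2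
    have hexpand : ((y - s) / 2) ^ 2 + s * ((y - s) / 2) + t = (y ^ 2 - (s ^ 2 - 4 * t)) / 4 := by
      field_simp
      ring
    rw [hexpand, hy, sub_self, zero_div]
  · intro x _
    field_simp
    ring
  · intro y _
    field_simp
    ring

theorem eq_quadraticChar_of_forall {K : Type*} [Field K] (F : Subfield K) [Fintype F]
    (η : K → ℂ) (h0 : η 0 = 0) (h1 : ∀ x : K, x ≠ 0 → (∃ y ∈ F, y ^ 2 = x) → η x = 1)
    (h2 : ∀ x : K, x ≠ 0 → ¬ (∃ y ∈ F, y ^ 2 = x) → η x = -1) (x : F) :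
    η x = quadraticChar F x := by
  have hsq : IsSquare x ↔ ∃ y ∈ F, y ^ 2 = (x : K) := by
    constructor
    · rintro ⟨y, rfl⟩
      exact ⟨y, y.2, by push_cast; ring⟩
    · rintro ⟨y, hy, hyx⟩
      exact ⟨⟨y, hy⟩, Subtype.ext (by push_cast; rw [← hyx]; ring)⟩
  rcases eq_or_ne x 0 with rfl | hx
  · simp [h0]
  have hx' : (x : K) ≠ 0 := by exact_mod_cast hx
  by_cases hx2 : IsSquare x
  · rw [h1 _ hx' (hsq.mp hx2), (quadraticChar_one_iff_isSquare hx).mpr hx2]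
    simp
  · rw [h2 _ hx' (hsq.not.mp hx2), quadraticChar_neg_one_iff_not_isSquare.mpr hx2]
    simp

theorem natCast_card_filter_sq_eq_add_one {K : Type*} [Field K] (F : Subfield K) [Fintype F]
    (h2 : (2 : F) ≠ 0) (η : K → ℂ) (hη0 : η 0 = 0)
    (hη1 : ∀ x : K, x ≠ 0 → (∃ y ∈ F, y ^ 2 = x) → η x = 1)
    (hη2 : ∀ x : K, x ≠ 0 → ¬ (∃ y ∈ F, y ^ 2 = x) → η x = -1) (x : F) :
    (#{y : F | y ^ 2 = x} : ℂ) = η x + 1 := by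
  have hF : ringChar F ≠ 2 := fun h => h2 <| by
    exact_mod_cast (ringChar.spec F 2).mpr (h ▸ dvd_refl _)
  have hcard := quadraticChar_card_sqrts hF x
  rw [eq_quadraticChar_of_forall F η hη0 hη1 hη2 x]
  simp only [Set.toFinset_ofPred] at hcard
  exact_mod_cast hcard

theorem stmt16_general (p n q : ℕ) (hp : p.Prime) (hp2 : p ≠ 2)
    (hq : q = p ^ n)
    (K : Type) [Field K] [Fintype K] (hK : Fintype.card K = q ^ 2)
    (ζ : ℂ) (hζ : IsPrimitiveRoot ζ p)
    (χ : K → ℂ)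
    (hχ : ∀ x : K, ∀ m : ℕ, (m : K) = ∑ i ∈ Finset.range (2 * n), x ^ p ^ i →
      χ x = ζ ^ m)
    (η : K → ℂ) (hη0 : η 0 = 0)
    (hη1 : ∀ x : K, x ≠ 0 → (∃ y : K, y ^ q = y ∧ y ^ 2 = x) → η x = 1)
    (hη2 : ∀ x : K, x ≠ 0 → ¬ (∃ y : K, y ^ q = y ∧ y ^ 2 = x) → η x = -1)
    (a b c : K) (hab : (a ^ q + b) ^ q = a ^ q + b) :
    ∑ u ∈ Finset.univ.filter (fun u : K => u ^ q = u ∧ u ≠ 0),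
      ∑ w : K,
        χ (u * w ^ (q + 1) + u * w ^ 2 + (a ^ q * u ^ q + b * u) * w + c * u) =
      η ((a ^ q + b) ^ 2 - 4 * (c ^ q + c)) * (q : ℂ) ^ 2 := by
  subst hq
  have := Fact.mk hp
  have hK' : Fintype.card K = p ^ (2 * n) := by rw [hK, ← pow_mul, mul_comm]
  have := charP_of_card_eq_prime_pow hK'
  have h2 : (2 : K) ≠ 0 := Ring.two_ne_zero (by rwa [ringChar.eq K p])
  obtain rfl := eq_traceAddChar_of_forall hK' hζ hχ
  let s : frobFixedSubfield K p n := ⟨a ^ p ^ n + b, hab⟩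
  let T : frobFixedSubfield K p n := ⟨c ^ p ^ n + c, frobTrace_mem hK c⟩
  have hlin : ∀ u ∈ univ.filter (fun u : K => u ^ p ^ n = u ∧ u ≠ 0), ∀ w : K,
      (a ^ p ^ n * u ^ p ^ n + b * u) * w = s * u * w := by
    intro u hu w
    rw [(mem_filter.mp hu).2.1]
    ring
  simp_rw +contextual [hlin]
  have h2F : (2 : frobFixedSubfield K p n) ≠ 0 := fun h =>
    h2 (by rw [← map_ofNat (frobFixedSubfield K p n).subtype 2, h, map_zero])
  have hD : ((s ^ 2 - 4 * T : frobFixedSubfield K p n) : K) =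
      (a ^ p ^ n + b) ^ 2 - 4 * (c ^ p ^ n + c) := rfl
  rw [sum_sum_addChar_eq_sq_mul_card_roots_sub_one hK (fun x => traceAddChar_pow_pow hζ x n) h2
    (traceAddChar_ne_one hζ) s T c rfl, card_filter_quadratic_eq_card_filter_sq h2F,
    natCast_card_filter_sq_eq_add_one _ h2F η hη0 hη1 hη2, hD]
  push_cast
  ring

/-- Let `a, b, c ∈ F_{q²}` with `a^q + b ∈ F_q`. Then
`∑_{u ∈ F_q*} ∑_{w ∈ F_{q²}} χ(u·w^{q+1} + u·w² + (a^q·u^q + b·u)·w + c·u)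
  = η((a^q + b)² − 4Tr(c)) · q²`.
Here `q` is a power of an odd prime `p`, `K` plays the role of `F_{q²}`,
`F_q = {x : K | x^q = x}`, `Tr(x) = x^q + x`, `χ` is the canonical additive character of
`F_{q²}` (via the absolute trace `∑_{i < 2n} x^(p^i)`), and `η` is the quadratic character
of `F_q` extended by `η(0) = 0`. -/
theorem stmt16 (p n q : ℕ) (hp : p.Prime) (hp2 : p ≠ 2) (hn : 0 < n)
    (hq : q = p ^ n)
    (K : Type) [Field K] [Fintype K] (hK : Fintype.card K = q ^ 2)
    (ζ : ℂ) (hζ : IsPrimitiveRoot ζ p)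
    (χ : K → ℂ)
    (hχ : ∀ x : K, ∀ m : ℕ, (m : K) = ∑ i ∈ Finset.range (2 * n), x ^ p ^ i →
      χ x = ζ ^ m)
    (η : K → ℂ) (hη0 : η 0 = 0)
    (hη1 : ∀ x : K, x ≠ 0 → (∃ y : K, y ^ q = y ∧ y ^ 2 = x) → η x = 1)
    (hη2 : ∀ x : K, x ≠ 0 → ¬ (∃ y : K, y ^ q = y ∧ y ^ 2 = x) → η x = -1)
    (a b c : K) (hab : (a ^ q + b) ^ q = a ^ q + b) :
    ∑ u ∈ Finset.univ.filter (fun u : K => u ^ q = u ∧ u ≠ 0),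
      ∑ w : K,
        χ (u * w ^ (q + 1) + u * w ^ 2 + (a ^ q * u ^ q + b * u) * w + c * u) =
      η ((a ^ q + b) ^ 2 - 4 * (c ^ q + c)) * (q : ℂ) ^ 2 :=
  stmt16_general p n q hp hp2 hq K hK ζ hζ χ hχ η hη0 hη1 hη2 a b c hab
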